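/- arXiv:2105.07724 — 3 statements merged into one kernel-verified Lean document; each statement's English description precedes it below -/
import Mathlib

section
/- For a formal variable v and integers a < ppar (ppar ≥ 2 a modulus), one has the expansion [b·p^{(t)}]_v = sum over tuples (i_t, ..., i_0) with 0 ≤ i_t ≤ (b'-1)/2, 0 ≤ i_{t-1} ≤ (p'-1)/2, ..., 0 ≤ i_0 ≤ (ℓ'-1)/2 of the products [2]_{v^{(b-1-2i_t)p^{(t)}}} · [2]_{v^{(p-1-2i_{t-1})p^{(t-1)}}} · ... · [2]_{v^{(ℓ-1-2i_0)}}, where x' denotes x if x is odd and x-1 if x is even, and [2]_{v^0} is interpreted as 1. -/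
/-- `plpow p ℓ 0 = 1` and `plpow p ℓ i = p^(i-1) * ℓ` for `i ≥ 1`. -/
def plpow (p ℓ : ℕ) : ℕ → ℕ
  | 0 => 1
  | i + 1 => p ^ i * ℓ

/-- The quantum integer `[m]_y = (y^m - y^{-m})/(y - y^{-1})` at base `y`. -/
noncomputable def qnumAt (y : RatFunc ℚ) (m : ℕ) : RatFunc ℚ :=
  (y ^ (m : ℤ) - y ^ (-(m : ℤ))) / (y - y⁻¹)

/-- `[2]_{v^e}`, interpreted as `1` when `e = 0`. -/
noncomputable def qtwo (e : ℕ) : RatFunc ℚ :=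
  if e = 0 then 1 else RatFunc.X ^ (e : ℤ) + RatFunc.X ^ (-(e : ℤ))

/-- `x' = x` if `x` is odd, `x - 1` if `x` is even. -/
def oddPart (x : ℕ) : ℕ := if Odd x then x else x - 1

/-!
Writing `{n} = v^n - v^{-n}`, one has `[2]_{v^{(k+1)N}} {N} = {(k+2)N} - {kN}`, so the sum
`∑_{0 ≤ i ≤ (m-1)/2} [2]_{v^{(m-1-2i)N}}` telescopes to `{mN}/{N}`; that is,
`[mN]_v = [m]_{v^N} [N]_v` with `[m]_{v^N}` expanded into `[2]`'s. Since `p^{(j+1)} = p · p^{(j)}`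
for `j ≥ 1` and `p^{(1)} = ℓ · p^{(0)}`, iterating factors `[b p^{(t)}]_v` into `t + 1` such sums,
and multiplying them out gives the sum over tuples.
-/

section QuantumNumbers

variable {K : Type*} [Field K]

def twoAt (y : K) (e : ℕ) : K := if e = 0 then 1 else y ^ (e : ℤ) + y ^ (-(e : ℤ))

def qnumNumer (y : K) (n : ℕ) : K := y ^ (n : ℤ) - y ^ (-(n : ℤ))

/-- `[m]_{y^N}` expanded as `∑_{0 ≤ i ≤ (m-1)/2} [2]_{y^{(m-1-2i)N}}`. -/
def qnumExpansion (y : K) (m N : ℕ) : K :=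
  ∑ i ∈ Finset.range ((m - 1) / 2 + 1), twoAt y ((m - 1 - 2 * i) * N)

theorem twoAt_mul_qnumNumer {y : K} (hy : y ≠ 0) (k N : ℕ) :
    twoAt y ((k + 1) * N) * qnumNumer y N = qnumNumer y ((k + 2) * N) - qnumNumer y (k * N) := by
  rcases eq_or_ne N 0 with rfl | hN
  · simp [qnumNumer]
  · simp only [twoAt, qnumNumer, mul_ne_zero (Nat.succ_ne_zero k) hN, if_false, zpow_neg,
      zpow_natCast]
    field_simp
    ring

theorem qnumExpansion_add_three (y : K) (m N : ℕ) :
    qnumExpansion y (m + 3) N = twoAt y ((m + 2) * N) + qnumExpansion y (m + 1) N := by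
  rw [qnumExpansion, show (m + 3 - 1) / 2 + 1 = (m + 1 - 1) / 2 + 1 + 1 by omega,
    Finset.sum_range_succ', add_comm, qnumExpansion, Nat.mul_zero, Nat.sub_zero]
  refine congrArg _ (Finset.sum_congr rfl fun i _ => ?_)
  rw [show m + 3 - 1 - 2 * (i + 1) = m + 1 - 1 - 2 * i by omega]

theorem qnumNumer_mul {y : K} (hy : y ≠ 0) {m : ℕ} (hm : 1 ≤ m) (N : ℕ) :
    qnumNumer y (m * N) = qnumExpansion y m N * qnumNumer y N := by
  obtain ⟨m, rfl⟩ := Nat.exists_eq_add_of_le' hm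
  clear hm
  induction m using Nat.twoStepInduction with
  | zero => simp [qnumExpansion, twoAt]
  | one =>
    have := twoAt_mul_qnumNumer hy 0 N
    simp_all [qnumExpansion, qnumNumer]
  | more m ih _ =>
    rw [show m + 2 + 1 = m + 3 from rfl, qnumExpansion_add_three, add_mul (twoAt y _), ← ih,
      twoAt_mul_qnumNumer hy (m + 1) N, sub_add_cancel]

end QuantumNumbers

theorem qtwo_eq_twoAt : qtwo = twoAt RatFunc.X := rfl

theorem oddPart_sub_one_div_two (m : ℕ) : (oddPart m - 1) / 2 = (m - 1) / 2 := by
  unfold oddPart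
  split_ifs with h
  · rfl
  · obtain ⟨k, rfl⟩ := Nat.not_odd_iff_even.mp h
    omega

theorem plpow_succ (p ℓ j : ℕ) : plpow p ℓ (j + 1) = (if j = 0 then ℓ else p) * plpow p ℓ j := by
  cases j <;> simp [plpow, pow_succ]; ring

theorem RatFunc.X_sub_X_inv_ne_zero {K : Type*} [Field K] :
    (RatFunc.X : RatFunc K) - RatFunc.X⁻¹ ≠ 0 := by
  rw [sub_ne_zero]
  intro h
  have := congrArg RatFunc.intDegree h
  rw [RatFunc.intDegree_inv, RatFunc.intDegree_X] at this
  omega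

theorem qnumAt_mul {y : RatFunc ℚ} (hy : y ≠ 0) {m : ℕ} (hm : 1 ≤ m) (N : ℕ) :
    qnumAt y (m * N) = qnumExpansion y m N * qnumAt y N :=
  (congrArg (· / (y - y⁻¹)) (qnumNumer_mul hy hm N)).trans (mul_div_assoc _ _ _)

theorem qnumAt_one {y : RatFunc ℚ} (hy : y - y⁻¹ ≠ 0) : qnumAt y 1 = 1 := by
  simpa [qnumAt] using div_self hy

theorem qnumAt_plpow {y : RatFunc ℚ} (hy : y - y⁻¹ ≠ 0) {p ℓ : ℕ} (hp : 1 ≤ p) (hℓ : 1 ≤ ℓ)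
    (t : ℕ) : qnumAt y (plpow p ℓ t) =
      ∏ j ∈ Finset.range t, qnumExpansion y (if j = 0 then ℓ else p) (plpow p ℓ j) := by
  have hy₀ : y ≠ 0 := by rintro rfl; simp at hy
  induction t with
  | zero => exact qnumAt_one hy
  | succ j ih =>
    rw [plpow_succ, qnumAt_mul hy₀ (by split_ifs <;> assumption), ih, Finset.prod_range_succ,
      mul_comm]

theorem qnum_eve_character_expansion_general (p ℓ b t : ℕ) (hp : 2 ≤ p) (hℓ : 2 ≤ ℓ)
    (hb : 1 ≤ b) :
    qnumAt RatFunc.X (b * plpow p ℓ t) =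
      ∑ A ∈ Fintype.piFinset (fun j : Fin (t + 1) =>
          Finset.range ((if (j : ℕ) = t then (oddPart b - 1) / 2
            else if (j : ℕ) = 0 then (oddPart ℓ - 1) / 2
            else (oddPart p - 1) / 2) + 1)),
        ∏ j : Fin (t + 1),
          qtwo (if (j : ℕ) = t then (b - 1 - 2 * A j) * plpow p ℓ t
            else if (j : ℕ) = 0 then ℓ - 1 - 2 * A j
            else (p - 1 - 2 * A j) * plpow p ℓ (j : ℕ)) := by
  trans ∏ j : Fin (t + 1),
    qnumExpansion RatFunc.X (if (j : ℕ) = t then b else if (j : ℕ) = 0 then ℓ else p) (plpow p ℓ j)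
  · rw [Fin.prod_univ_castSucc, qnumAt_mul RatFunc.X_ne_zero hb,
      qnumAt_plpow RatFunc.X_sub_X_inv_ne_zero (by omega) (by omega), ← Fin.prod_univ_eq_prod_range,
      mul_comm]
    simp only [Fin.val_last, Fin.val_castSucc, if_true, Fin.is_lt, Nat.ne_of_lt, if_false]
  · simp only [qnumExpansion, Finset.prod_univ_sum]
    refine Finset.sum_congr ?_ fun A _ => Finset.prod_congr rfl fun j _ => ?_
    · congr
      funext j
      split_ifs <;> simp [oddPart_sub_one_div_two]
    · split_ifs <;> simp [plpow, qtwo_eq_twoAt, *]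

/-- The expansion
`[b·p^{(t)}]_v = ∑_{(i_t,…,i_0)} [2]_{v^{(b-1-2i_t)p^{(t)}}} · [2]_{v^{(p-1-2i_{t-1})p^{(t-1)}}} ⋯ [2]_{v^{(ℓ-1-2i_0)}}`,
where `0 ≤ i_t ≤ (b'-1)/2`, `0 ≤ i_j ≤ (p'-1)/2` for `0 < j < t`, `0 ≤ i_0 ≤ (ℓ'-1)/2`. -/
theorem qnum_eve_character_expansion (p ℓ b t : ℕ) (hp : 2 ≤ p) (hℓ : 2 ≤ ℓ)
    (hb : 1 ≤ b) (ht : 1 ≤ t) :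
    qnumAt RatFunc.X (b * plpow p ℓ t) =
      ∑ A ∈ Fintype.piFinset (fun j : Fin (t + 1) =>
          Finset.range ((if (j : ℕ) = t then (oddPart b - 1) / 2
            else if (j : ℕ) = 0 then (oddPart ℓ - 1) / 2
            else (oddPart p - 1) / 2) + 1)),
        ∏ j : Fin (t + 1),
          qtwo (if (j : ℕ) = t then (b - 1 - 2 * A j) * plpow p ℓ t
            else if (j : ℕ) = 0 then ℓ - 1 - 2 * A j
            else (p - 1 - 2 * A j) * plpow p ℓ (j : ℕ)) :=
  qnum_eve_character_expansion_general p ℓ b t hp hℓ hb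
end

section
/- Down-admissibility gives a bijection: for v ∈ ℕ with pℓ-adic expansion, the map S ↦ v[S] (negating the digits indexed by S) is a bijection from down-admissible subsets S ⊂ ℕ₀ for v onto the support supp(v), and the support has exactly 2^{g(v)} elements, where g(v) is the number of non-zero non-leading digits of v. -/
/-- A finite set `S ⊆ ℕ` is down-admissible for a digit sequence `a` if (i) the digit at the
minimum of every stretch (maximal run of consecutive integers) of `S` is nonzero, and
(ii) if `s ∈ S` and `a (s+1) = 0` then `s+1 ∈ S`. -/
def DownAdm (a : ℕ → ℕ) (S : Finset ℕ) : Prop :=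
  (∀ s ∈ S, (s = 0 ∨ s - 1 ∉ S) → a s ≠ 0) ∧ (∀ s ∈ S, a (s + 1) = 0 → s + 1 ∈ S)

/-- The downward reflection `v[S]`: negate the digits of `v` indexed by `S`
(keeping the leading digit `a j`), interpreted as an integer. -/
def downReflect (p ℓ : ℕ) (a : ℕ → ℕ) (j : ℕ) (S : Finset ℕ) : ℤ :=
  ((a j * plpow p ℓ j : ℕ) : ℤ) +
    ∑ i ∈ Finset.range j, (if i ∈ S then (-1 : ℤ) else 1) * ((a i * plpow p ℓ i : ℕ) : ℤ)

/-!
Place values grow so fast that each one exceeds the total contribution of all lower digits: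
`∑_{m<i} a_m p^{(m)} < p^{(i)}`. Hence in `v[S]` the signs of the nonzero digits can be read
off from the top down, so `v[S]` determines which nonzero digits lie in `S`. Down-admissibility
forces the rest of `S`: a zero digit lies in `S` exactly when the digit below it does, and the
zero digit in place `0` never does. Conversely, every set `T` of nonzero lower digits is
`S ∩ {i < j | a_i ≠ 0}` for the down-admissible `S` obtained by adding to each `t ∈ T` the run of
zero digits just above it, which gives `2^{g(v)}` down-admissible sets.
-/

open Finset

section PlaceValues

variable {p ℓ : ℕ} {a : ℕ → ℕ}

lemma plpow_add_two (p ℓ k : ℕ) : plpow p ℓ (k + 2) = p * plpow p ℓ (k + 1) := by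
  simp only [plpow, pow_succ]
  ring

lemma succ_mul_plpow_le_plpow_succ (ha0 : a 0 < ℓ) (hai : ∀ i, 0 < i → a i < p) (k : ℕ) :
    (a k + 1) * plpow p ℓ k ≤ plpow p ℓ (k + 1) := by
  cases k with
  | zero => simpa [plpow] using ha0
  | succ k =>
    rw [plpow_add_two]
    exact Nat.mul_le_mul_right _ (hai _ k.succ_pos)

theorem sum_range_digit_mul_plpow_lt (ha0 : a 0 < ℓ) (hai : ∀ i, 0 < i → a i < p) (k : ℕ) :
    ∑ i ∈ range k, a i * plpow p ℓ i < plpow p ℓ k := by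
  induction k with
  | zero => simp [plpow]
  | succ k ih =>
    have hstep := succ_mul_plpow_le_plpow_succ ha0 hai k
    rw [add_one_mul] at hstep
    rw [sum_range_succ]
    omega

theorem sum_range_digit_mul_plpow_lt_of_ne_zero (ha0 : a 0 < ℓ)
    (hai : ∀ i, 0 < i → a i < p) {k : ℕ} (hk : a k ≠ 0) :
    ∑ i ∈ range k, a i * plpow p ℓ i < a k * plpow p ℓ k :=
  (sum_range_digit_mul_plpow_lt ha0 hai k).trans_le
    (Nat.le_mul_of_pos_left _ (Nat.pos_of_ne_zero hk))

end PlaceValues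

theorem mem_iff_of_sum_range_ite_eq {c : ℕ → ℕ} (hc : ∀ i, c i ≠ 0 → ∑ m ∈ range i, c m < c i)
    {S S' : Finset ℕ} {k : ℕ}
    (h : ∑ i ∈ range k, (if i ∈ S then c i else 0) = ∑ i ∈ range k, if i ∈ S' then c i else 0) :
    ∀ i < k, c i ≠ 0 → (i ∈ S ↔ i ∈ S') := by
  induction k with
  | zero => simp
  | succ k ih =>
    rw [sum_range_succ, sum_range_succ] at h
    have hle (T : Finset ℕ) : ∑ i ∈ range k, (if i ∈ T then c i else 0) ≤ ∑ i ∈ range k, c i :=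
      sum_le_sum fun i _ => by split_ifs <;> simp
    have htop : c k ≠ 0 → (k ∈ S ↔ k ∈ S') := by
      intro hk
      have := hc k hk
      have := hle S
      have := hle S'
      by_cases hS : k ∈ S <;> by_cases hS' : k ∈ S' <;> simp only [hS, hS', if_true, if_false] at h
        <;> simp only [hS, hS'] <;> omega
    have htop_eq : (if k ∈ S then c k else 0) = if k ∈ S' then c k else 0 := by
      by_cases hk : c k = 0
      · simp [hk]
      · simp only [htop hk]
    intro i hi hci
    rcases Nat.lt_succ_iff_lt_or_eq.1 hi with hi | rfl
    · exact ih (by omega) i hi hci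
    · exact htop hci

lemma downReflect_eq_sub (p ℓ : ℕ) (a : ℕ → ℕ) (j : ℕ) (S : Finset ℕ) :
    downReflect p ℓ a j S =
      ((a j * plpow p ℓ j + ∑ i ∈ range j, a i * plpow p ℓ i : ℕ) : ℤ) -
        2 * ((∑ i ∈ range j, if i ∈ S then a i * plpow p ℓ i else 0 : ℕ) : ℤ) := by
  simp only [downReflect, Nat.cast_add, Nat.cast_sum, Nat.cast_ite, Nat.cast_zero, mul_sum,
    add_sub_assoc, ← sum_sub_distrib]
  congr 1
  refine sum_congr rfl fun i _ => ?_
  split_ifs <;> ring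

namespace DownAdm

variable {a : ℕ → ℕ} {S S' : Finset ℕ}

lemma zero_notMem (hS : DownAdm a S) (h0 : a 0 = 0) : 0 ∉ S :=
  fun hmem => hS.1 0 hmem (Or.inl rfl) h0

lemma succ_mem_iff (hS : DownAdm a S) {i : ℕ} (hi : a (i + 1) = 0) : i + 1 ∈ S ↔ i ∈ S :=
  ⟨fun hmem => by_contra fun hnot => hS.1 _ hmem (Or.inr (by simpa using hnot)) hi,
    fun hmem => hS.2 i hmem hi⟩

theorem ext_of_ne_zero (hS : DownAdm a S) (hS' : DownAdm a S')
    (h : ∀ i, a i ≠ 0 → (i ∈ S ↔ i ∈ S')) : S = S' := by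
  ext i
  induction i with
  | zero =>
    by_cases h0 : a 0 = 0
    · exact iff_of_false (hS.zero_notMem h0) (hS'.zero_notMem h0)
    · exact h 0 h0
  | succ i ih =>
    by_cases hi : a (i + 1) = 0
    · rw [hS.succ_mem_iff hi, hS'.succ_mem_iff hi, ih]
    · exact h _ hi

theorem ext_of_subset_range {j : ℕ} (hS : DownAdm a S) (hS' : DownAdm a S')
    (hSj : S ⊆ range j) (hS'j : S' ⊆ range j) (h : ∀ i < j, a i ≠ 0 → (i ∈ S ↔ i ∈ S')) :
    S = S' :=
  hS.ext_of_ne_zero hS' fun i hi =>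
    if hij : i < j then h i hij hi
    else iff_of_false (fun hm => hij (mem_range.1 (hSj hm))) fun hm => hij (mem_range.1 (hS'j hm))

end DownAdm

theorem downReflect_injOn {p ℓ : ℕ} {a : ℕ → ℕ} {j : ℕ} (ha0 : a 0 < ℓ)
    (hai : ∀ i, 0 < i → a i < p) :
    Set.InjOn (downReflect p ℓ a j) {S : Finset ℕ | S ⊆ range j ∧ DownAdm a S} := by
  rintro S ⟨hSj, hS⟩ S' ⟨hS'j, hS'⟩ h
  rw [downReflect_eq_sub, downReflect_eq_sub] at h
  have hsum : ∑ i ∈ range j, (if i ∈ S then a i * plpow p ℓ i else 0) =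
      ∑ i ∈ range j, if i ∈ S' then a i * plpow p ℓ i else 0 := by
    omega
  have hmem := mem_iff_of_sum_range_ite_eq
    (fun i hi => sum_range_digit_mul_plpow_lt_of_ne_zero ha0 hai (left_ne_zero_of_mul hi)) hsum
  exact hS.ext_of_subset_range hS' hSj hS'j fun i hij hi =>
    hmem i hij (pos_of_gt (sum_range_digit_mul_plpow_lt_of_ne_zero ha0 hai hi)).ne'

/-- The down-admissible set whose nonzero digits below `j` are exactly those in `T`. -/
def fillZeros (a : ℕ → ℕ) (j : ℕ) (T : Finset ℕ) : Finset ℕ :=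
  (range j).filter fun i => ∃ t ∈ T, t ≤ i ∧ ∀ m ∈ Ioc t i, a m = 0

section FillZeros

variable {a : ℕ → ℕ} {j i : ℕ} {T : Finset ℕ}

lemma mem_fillZeros :
    i ∈ fillZeros a j T ↔ i < j ∧ ∃ t ∈ T, t ≤ i ∧ ∀ m ∈ Ioc t i, a m = 0 := by
  simp [fillZeros]

theorem downAdm_fillZeros (haj : a j ≠ 0) (hT : ∀ t ∈ T, a t ≠ 0) :
    DownAdm a (fillZeros a j T) := by
  refine ⟨fun s hs hstart hs0 => ?_, fun s hs hs0 => ?_⟩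
  · obtain ⟨hsj, t, htT, hts, hzero⟩ := mem_fillZeros.1 hs
    have hts : t < s := lt_of_le_of_ne hts fun h => hT t htT (h ▸ hs0)
    refine hstart.elim (by omega) fun hprev => hprev (mem_fillZeros.2 ⟨by omega, t, htT, by omega,
      fun m hm => hzero m (Ioc_subset_Ioc_right (by omega) hm)⟩)
  · obtain ⟨hsj, t, htT, hts, hzero⟩ := mem_fillZeros.1 hs
    have hs1j : s + 1 < j := lt_of_le_of_ne hsj fun h => haj (h ▸ hs0)
    refine mem_fillZeros.2 ⟨hs1j, t, htT, by omega, fun m hm => ?_⟩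
    obtain ⟨htm, hms⟩ := mem_Ioc.1 hm
    rcases hms.lt_or_eq with hms | rfl
    · exact hzero m (mem_Ioc.2 ⟨htm, by omega⟩)
    · exact hs0

theorem fillZeros_inter_filter_ne_zero (hT : T ⊆ (range j).filter fun i => a i ≠ 0) :
    fillZeros a j T ∩ (range j).filter (fun i => a i ≠ 0) = T := by
  ext i
  simp only [mem_inter, mem_fillZeros, mem_filter, mem_range]
  constructor
  · rintro ⟨⟨-, t, htT, hti, hzero⟩, -, hi⟩
    obtain rfl : t = i :=
      hti.eq_or_lt.elim id fun hlt => absurd (hzero i (mem_Ioc.2 ⟨hlt, le_rfl⟩)) hi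
    exact htT
  · intro hiT
    obtain ⟨hij, hi⟩ := mem_filter.1 (hT hiT)
    exact ⟨⟨mem_range.1 hij, i, hiT, le_rfl, by simp⟩, mem_range.1 hij, hi⟩

end FillZeros

open Classical in
theorem card_downAdm {a : ℕ → ℕ} {j : ℕ} (haj : a j ≠ 0) :
    ((range j).powerset.filter (fun S => DownAdm a S)).card =
      2 ^ ((range j).filter (fun i => a i ≠ 0)).card := by
  rw [← card_powerset]
  refine card_bij (fun S _ => S ∩ (range j).filter fun i => a i ≠ 0)
    (fun S _ => mem_powerset.2 inter_subset_right) ?_ ?_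
  · intro S hS S' hS' h
    simp only [mem_filter, mem_powerset] at hS hS'
    refine hS.2.ext_of_subset_range hS'.2 hS.1 hS'.1 fun i hij hi => ?_
    simpa [hij, hi] using congrArg (i ∈ ·) h
  · intro T hT
    rw [mem_powerset] at hT
    refine ⟨fillZeros a j T, mem_filter.2 ⟨mem_powerset.2 (filter_subset _ _), ?_⟩,
      fillZeros_inter_filter_ne_zero hT⟩
    exact downAdm_fillZeros haj fun t ht => (mem_filter.1 (hT ht)).2

open Classical in
theorem downAdm_reflect_bijection_general (p ℓ : ℕ)
    (j : ℕ) (a : ℕ → ℕ) (haj : a j ≠ 0)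
    (ha0 : a 0 < ℓ) (hai : ∀ i, 0 < i → a i < p) :
    Set.InjOn (downReflect p ℓ a j) {S : Finset ℕ | S ⊆ Finset.range j ∧ DownAdm a S} ∧
    ((Finset.range j).powerset.filter (fun S => DownAdm a S)).card =
      2 ^ ((Finset.range j).filter (fun i => a i ≠ 0)).card ∧
    (((Finset.range j).powerset.filter (fun S => DownAdm a S)).image
        (downReflect p ℓ a j)).card =
      2 ^ ((Finset.range j).filter (fun i => a i ≠ 0)).card := by
  have hinj : Set.InjOn (downReflect p ℓ a j) {S | S ⊆ range j ∧ DownAdm a S} :=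
    downReflect_injOn ha0 hai
  have hcard := card_downAdm (a := a) haj
  refine ⟨hinj, hcard, ?_⟩
  rw [card_image_of_injOn (hinj.mono fun S hS => by simpa using hS), hcard]

open Classical in
/-- Down-admissibility gives a bijection: `S ↦ v[S]` is injective on down-admissible sets,
there are exactly `2^{g(v)}` of them (where `g(v)` is the number of nonzero non-leading
digits of `v`), and hence the support `supp(v)` (the image) has exactly `2^{g(v)}`
elements. -/
theorem downAdm_reflect_bijection (p ℓ : ℕ) (hp : 2 ≤ p) (hℓ : 2 ≤ ℓ)
    (j : ℕ) (a : ℕ → ℕ) (haj : a j ≠ 0) (htop : ∀ i, j < i → a i = 0)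
    (ha0 : a 0 < ℓ) (hai : ∀ i, 0 < i → a i < p) :
    Set.InjOn (downReflect p ℓ a j) {S : Finset ℕ | S ⊆ Finset.range j ∧ DownAdm a S} ∧
    ((Finset.range j).powerset.filter (fun S => DownAdm a S)).card =
      2 ^ ((Finset.range j).filter (fun i => a i ≠ 0)).card ∧
    (((Finset.range j).powerset.filter (fun S => DownAdm a S)).image
        (downReflect p ℓ a j)).card =
      2 ^ ((Finset.range j).filter (fun i => a i ≠ 0)).card :=
  downAdm_reflect_bijection_general p ℓ j a haj ha0 hai
end

section
/- If S is down-admissible for v, then S is up-admissible for v[S] and v[S](S) = v (downward followed by upward reflection along the same set recovers v). -/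
/-- The `i`-th `pℓ`-adic digit of `n`. -/
def plDigit (p ℓ n : ℕ) : ℕ → ℕ
  | 0 => n % ℓ
  | i + 1 => n / ℓ / p ^ i % p

/-- `S` is up-admissible for a digit sequence `c` if (i) the digit at the minimum of every
stretch of `S` is nonzero, and (ii) if `s ∈ S` and `c (s+1) = p - 1` then `s+1 ∈ S`. -/
def UpAdm (p : ℕ) (c : ℕ → ℕ) (S : Finset ℕ) : Prop :=
  (∀ s ∈ S, (s = 0 ∨ s - 1 ∉ S) → c s ≠ 0) ∧ (∀ s ∈ S, c (s + 1) = p - 1 → s + 1 ∈ S)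

/-!
Write `w k = plpow p ℓ k`, so that `w (k + 1) = plBase p ℓ k * w k`. The downward reflection `v[S]`
has explicit `pℓ`-adic digits `downDigit`: the digit `a k` at `k ∈ S` becomes
`plBase p ℓ k - a k` by borrowing one unit `w (k + 1)` from the next place, and each place whose
predecessor lies in `S` pays that unit back. Down-admissibility is exactly what keeps these digits
in `[0, plBase p ℓ k)`, so they are the digits of `v[S]`, and it turns into up-admissibility for
them. The upward reflection of each digit gives back `a k * w k` up to the same borrow terms with
the opposite sign, and the borrow terms telescope away because `S` stops below `j`.
-/

open Finset

def plBase (p ℓ k : ℕ) : ℕ := if k = 0 then ℓ else p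

lemma plpow_succ_s13 (p ℓ k : ℕ) : plpow p ℓ (k + 1) = plBase p ℓ k * plpow p ℓ k := by
  rcases k with _ | k
  · simp [plpow, plBase]
  · simp [plpow, plBase, pow_succ]
    ring

lemma sum_range_succ_mul_pow (e : ℕ → ℕ) (p k : ℕ) :
    ∑ t ∈ range (k + 1), e t * p ^ t = e 0 + p * ∑ t ∈ range k, e (t + 1) * p ^ t := by
  rw [sum_range_succ', mul_sum, add_comm]
  simp only [pow_zero, mul_one, pow_succ]
  congr 1
  exact sum_congr rfl fun _ _ => by ring

lemma sum_range_succ_mul_plpow (d : ℕ → ℕ) (p ℓ k : ℕ) :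
    ∑ t ∈ range (k + 1), d t * plpow p ℓ t = d 0 + ℓ * ∑ t ∈ range k, d (t + 1) * p ^ t := by
  rw [sum_range_succ', mul_sum, add_comm]
  simp only [plpow, mul_one]
  congr 1
  exact sum_congr rfl fun _ _ => by ring

lemma sum_range_mul_pow_div_pow_mod {p : ℕ} {e : ℕ → ℕ} (he : ∀ t, e t < p) (i k : ℕ) :
    (∑ t ∈ range k, e t * p ^ t) / p ^ i % p = if i < k then e i else 0 := by
  have hp : 0 < p := (Nat.zero_le _).trans_lt (he 0)
  induction i generalizing e k with
  | zero =>
    rcases k with _ | k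
    · simp
    · simp [sum_range_succ_mul_pow, Nat.mod_eq_of_lt (he 0)]
  | succ i ih =>
    rcases k with _ | k
    · simp
    · rw [sum_range_succ_mul_pow, pow_succ', ← Nat.div_div_eq_div_mul,
        Nat.add_mul_div_left _ _ hp, Nat.div_eq_of_lt (he 0), zero_add,
        ih (fun t => he (t + 1))]
      simp

lemma plDigit_sum_mul_plpow {p ℓ : ℕ} {d : ℕ → ℕ} (hd : ∀ k, d k < plBase p ℓ k)
    {i m : ℕ} (hi : i < m) : plDigit p ℓ (∑ t ∈ range m, d t * plpow p ℓ t) i = d i := by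
  have hd0 : d 0 < ℓ := hd 0
  obtain ⟨m, rfl⟩ : ∃ m', m = m' + 1 := ⟨m - 1, by omega⟩
  rw [sum_range_succ_mul_plpow]
  rcases i with _ | i
  · simp [plDigit, Nat.mod_eq_of_lt hd0]
  · rw [plDigit, Nat.add_mul_div_left _ _ ((Nat.zero_le _).trans_lt hd0),
      Nat.div_eq_of_lt hd0, zero_add,
      sum_range_mul_pow_div_pow_mod (fun t => hd (t + 1)), if_pos (by omega)]

lemma UpAdm.congr_of_le {p j : ℕ} {c c' : ℕ → ℕ} {S : Finset ℕ} (h : UpAdm p c S)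
    (hS : S ⊆ range j) (hc : ∀ k ≤ j, c k = c' k) : UpAdm p c' S := by
  have hlt : ∀ s ∈ S, s < j := fun s hs => mem_range.mp (hS hs)
  refine ⟨fun s hs hstart => ?_, fun s hs hlast => h.2 s hs ?_⟩
  · rw [← hc s (hlt s hs).le]
    exact h.1 s hs hstart
  · rwa [hc (s + 1) (hlt s hs)]

lemma sum_range_ite_mem_succ {M : Type*} [AddCommMonoid M] (f : ℕ → M) {S : Finset ℕ} {j : ℕ}
    (hS : S ⊆ range j) :
    ∑ k ∈ range (j + 1), (if k ∈ S then f (k + 1) else 0) =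
      ∑ k ∈ range (j + 1), if 0 < k ∧ k - 1 ∈ S then f k else 0 := by
  have hj : j ∉ S := fun h => by simpa using hS h
  rw [sum_range_succ, sum_range_succ', if_neg hj]
  simp only [add_zero, lt_irrefl, false_and, if_false, Nat.succ_pos, true_and, Nat.add_sub_cancel]

def downDigit (p ℓ : ℕ) (a : ℕ → ℕ) (S : Finset ℕ) (k : ℕ) : ℕ :=
  (if k ∈ S then plBase p ℓ k - a k else a k) - if 0 < k ∧ k - 1 ∈ S then 1 else 0

def upDigit (c : ℕ → ℕ) (S : Finset ℕ) (k : ℕ) : ℤ :=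
  if k ∈ S then -(c k : ℤ) else if 0 < k ∧ k - 1 ∈ S then (c k : ℤ) + 2 else (c k : ℤ)

section DownReflection

variable {p ℓ : ℕ} {a : ℕ → ℕ} {S : Finset ℕ}

lemma DownAdm.ne_zero_of_mem {k : ℕ} (hadm : DownAdm a S) (hk : k ∈ S)
    (hstart : ¬(0 < k ∧ k - 1 ∈ S)) : a k ≠ 0 :=
  hadm.1 k hk <| by
    by_contra! h
    exact hstart ⟨Nat.pos_of_ne_zero h.1, h.2⟩

lemma DownAdm.ne_zero_of_not_mem {k : ℕ} (hadm : DownAdm a S) (hk : 0 < k)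
    (hprev : k - 1 ∈ S) (hkS : k ∉ S) : a k ≠ 0 := by
  intro h0
  have := hadm.2 (k - 1) hprev
  rw [Nat.sub_add_cancel hk] at this
  exact hkS (this h0)

variable (ha : ∀ k, a k < plBase p ℓ k) (hadm : DownAdm a S)
include ha hadm

lemma downDigit_lt_plBase (k : ℕ) : downDigit p ℓ a S k < plBase p ℓ k := by
  have := ha k
  unfold downDigit
  split_ifs with hk hb <;> try omega
  have := hadm.ne_zero_of_mem hk hb
  omega

lemma cast_downDigit (k : ℕ) :
    (downDigit p ℓ a S k : ℤ) =
      (if k ∈ S then (plBase p ℓ k : ℤ) - a k else a k) -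
        if 0 < k ∧ k - 1 ∈ S then 1 else 0 := by
  have := ha k
  unfold downDigit
  split_ifs with hk hb hb
  · omega
  · have := hadm.ne_zero_of_mem hk hb
    omega
  · have := hadm.ne_zero_of_not_mem hb.1 hb.2 hk
    omega
  · omega

lemma upAdm_downDigit : UpAdm p (downDigit p ℓ a S) S := by
  refine ⟨fun s hs hstart => ?_, fun s hs hlast => ?_⟩
  · have hb : ¬(0 < s ∧ s - 1 ∈ S) := by
      rintro ⟨h0, h1⟩
      rcases hstart with rfl | h
      exacts [h0.ne rfl, h h1]
    have := ha s
    simp only [downDigit, if_pos hs, if_neg hb]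
    omega
  · by_contra hs1
    have hb : 0 < s + 1 ∧ s + 1 - 1 ∈ S := ⟨s.succ_pos, by simpa using hs⟩
    have hlt := ha (s + 1)
    have hne := hadm.ne_zero_of_not_mem hb.1 hb.2 hs1
    simp only [downDigit, if_neg hs1, if_pos hb, plBase, if_neg s.succ_ne_zero] at hlast hlt
    omega

lemma downDigit_mul_plpow (k : ℕ) :
    ((downDigit p ℓ a S k * plpow p ℓ k : ℕ) : ℤ) =
      (if k ∈ S then (-1 : ℤ) else 1) * ((a k * plpow p ℓ k : ℕ) : ℤ) +
        (if k ∈ S then ((plpow p ℓ (k + 1) : ℕ) : ℤ) else 0) -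
        if 0 < k ∧ k - 1 ∈ S then ((plpow p ℓ k : ℕ) : ℤ) else 0 := by
  push_cast [cast_downDigit ha hadm, plpow_succ_s13]
  split_ifs <;> ring

lemma upDigit_downDigit_mul_plpow (k : ℕ) :
    upDigit (downDigit p ℓ a S) S k * ((plpow p ℓ k : ℕ) : ℤ) =
      ((a k * plpow p ℓ k : ℕ) : ℤ) -
        (if k ∈ S then ((plpow p ℓ (k + 1) : ℕ) : ℤ) else 0) +
        if 0 < k ∧ k - 1 ∈ S then ((plpow p ℓ k : ℕ) : ℤ) else 0 := by
  push_cast [upDigit, cast_downDigit ha hadm, plpow_succ_s13]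
  split_ifs <;> ring

variable {j : ℕ} (hS : S ⊆ range j)
include hS

lemma downReflect_eq_sum_downDigit :
    downReflect p ℓ a j S =
      ((∑ k ∈ range (j + 1), downDigit p ℓ a S k * plpow p ℓ k : ℕ) : ℤ) := by
  have hj : j ∉ S := fun h => by simpa using hS h
  rw [Nat.cast_sum, sum_congr rfl fun k _ => downDigit_mul_plpow ha hadm k, sum_sub_distrib,
    sum_add_distrib, sum_range_ite_mem_succ (fun k => ((plpow p ℓ k : ℕ) : ℤ)) hS,
    add_sub_cancel_right, sum_range_succ, if_neg hj, one_mul, add_comm, downReflect]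

lemma plDigit_downReflect {k : ℕ} (hk : k ≤ j) :
    plDigit p ℓ (downReflect p ℓ a j S).toNat k = downDigit p ℓ a S k := by
  rw [downReflect_eq_sum_downDigit ha hadm hS, Int.toNat_natCast,
    plDigit_sum_mul_plpow (downDigit_lt_plBase ha hadm) (Nat.lt_succ_of_le hk)]

lemma sum_upDigit_downDigit_mul_plpow :
    ∑ k ∈ range (j + 1), upDigit (downDigit p ℓ a S) S k * ((plpow p ℓ k : ℕ) : ℤ) =
      ∑ k ∈ range (j + 1), ((a k * plpow p ℓ k : ℕ) : ℤ) := by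
  rw [sum_congr rfl fun k _ => upDigit_downDigit_mul_plpow ha hadm k, sum_add_distrib,
    sum_sub_distrib, ← sum_range_ite_mem_succ (fun k => ((plpow p ℓ k : ℕ) : ℤ)) hS, sub_add_cancel]

end DownReflection

theorem downReflect_upReflect_general (p ℓ : ℕ)
    (j : ℕ) (a : ℕ → ℕ)
    (ha0 : a 0 < ℓ) (hai : ∀ i, 0 < i → a i < p)
    (S : Finset ℕ) (hS : S ⊆ Finset.range j) (hadm : DownAdm a S) :
    0 ≤ downReflect p ℓ a j S ∧
    UpAdm p (plDigit p ℓ (downReflect p ℓ a j S).toNat) S ∧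
    (∑ i ∈ Finset.range (j + 1),
        (if i ∈ S then -((plDigit p ℓ (downReflect p ℓ a j S).toNat i : ℤ))
          else if 0 < i ∧ i - 1 ∈ S then
            (plDigit p ℓ (downReflect p ℓ a j S).toNat i : ℤ) + 2
          else (plDigit p ℓ (downReflect p ℓ a j S).toNat i : ℤ)) *
          ((plpow p ℓ i : ℕ) : ℤ)) =
      ∑ i ∈ Finset.range (j + 1), ((a i * plpow p ℓ i : ℕ) : ℤ) := by
  have ha : ∀ k, a k < plBase p ℓ k := by
    rintro (_ | k)
    exacts [ha0, hai _ k.succ_pos]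
  have hdigit : ∀ k ≤ j, downDigit p ℓ a S k = plDigit p ℓ (downReflect p ℓ a j S).toNat k :=
    fun k hk => (plDigit_downReflect ha hadm hS hk).symm
  refine ⟨?_, (upAdm_downDigit ha hadm).congr_of_le hS hdigit, ?_⟩
  · rw [downReflect_eq_sum_downDigit ha hadm hS]
    positivity
  · rw [← sum_upDigit_downDigit_mul_plpow ha hadm hS]
    refine sum_congr rfl fun k hk => ?_
    rw [upDigit, hdigit k (Nat.lt_succ_iff.mp (mem_range.mp hk))]

/-- If `S` is down-admissible for `v`, then `v[S] ≥ 0`, `S` is up-admissible for the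
`pℓ`-adic digits of `v[S]`, and the upward reflection of `v[S]` along `S` (whose digits
are `c'_k = -c_k` if `k ∈ S`, `c_k + 2` if `k ∉ S, k-1 ∈ S`, and `c_k` otherwise)
recovers `v`. -/
theorem downReflect_upReflect (p ℓ : ℕ) (hp : 2 ≤ p) (hℓ : 2 ≤ ℓ)
    (j : ℕ) (a : ℕ → ℕ) (haj : a j ≠ 0) (htop : ∀ i, j < i → a i = 0)
    (ha0 : a 0 < ℓ) (hai : ∀ i, 0 < i → a i < p)
    (S : Finset ℕ) (hS : S ⊆ Finset.range j) (hadm : DownAdm a S) :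
    0 ≤ downReflect p ℓ a j S ∧
    UpAdm p (plDigit p ℓ (downReflect p ℓ a j S).toNat) S ∧
    (∑ i ∈ Finset.range (j + 1),
        (if i ∈ S then -((plDigit p ℓ (downReflect p ℓ a j S).toNat i : ℤ))
          else if 0 < i ∧ i - 1 ∈ S then
            (plDigit p ℓ (downReflect p ℓ a j S).toNat i : ℤ) + 2
          else (plDigit p ℓ (downReflect p ℓ a j S).toNat i : ℤ)) *
          ((plpow p ℓ i : ℕ) : ℤ)) =
      ∑ i ∈ Finset.range (j + 1), ((a i * plpow p ℓ i : ℕ) : ℤ) :=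
  downReflect_upReflect_general p ℓ j a ha0 hai S hS hadm
end
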